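/- arXiv:1810.12805 — 2 statements merged into one kernel-verified Lean document; each statement's English description precedes it below -/
import Mathlib

section
/- For a deep linear network (the same architecture but with the identity in place of every ReLU, i.e. y(a,W) = W_Hᵀ W_{H-1}ᵀ ⋯ W₀ᵀ a) with H ≥ 1 hidden layers and all hidden widths nᵢ > 1, the regularized loss ℓ_λ has no non-zero critical points in the set U(λ) = ⋃_{θ > 0} U(λ,θ) = {W ∈ ℝ^m : ℓ(W)^{1/2} ‖W‖_*^{H−1} < λ/(√2 · H(H+1) · r)}. -/
open scoped BigOperators

/-- Index set for all weights of the network: a weight `w^i_{j,k}` connects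
neuron `j` in layer `i` to neuron `k` in layer `i+1`. -/
abbrev WeightIdx (n : ℕ → ℕ) (H : ℕ) : Type :=
  (i : Fin (H + 1)) × (Fin (n i) × Fin (n (i + 1)))

/-- Weight space `ℝ^m`, with the Euclidean norm. -/
abbrev WeightSpace (n : ℕ → ℕ) (H : ℕ) : Type :=
  EuclideanSpace ℝ (WeightIdx n H)

/-- Activations of the deep linear network: `x_0 = a`, `x_{k+1} = W_k^T x_k`. -/
def linAct (n : ℕ → ℕ) (H : ℕ) (W : WeightSpace n H)
    (a : EuclideanSpace ℝ (Fin (n 0))) : (k : ℕ) → k ≤ H + 1 → (Fin (n k) → ℝ)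
  | 0, _ => a
  | k + 1, h => fun j =>
      ∑ l : Fin (n k), W ⟨⟨k, h⟩, (l, j)⟩ * linAct n H W a k (Nat.le_of_succ_le h) l

/-- Scalar output of the deep linear network, `y(a,W) = W_H^T ⋯ W_0^T a`. -/
def linOut (n : ℕ → ℕ) (H : ℕ) (hout : n (H + 1) = 1) (W : WeightSpace n H)
    (a : EuclideanSpace ℝ (Fin (n 0))) : ℝ :=
  linAct n H W a (H + 1) le_rfl ⟨0, by omega⟩

/-- Quadratic training loss `ℓ(W)` of the deep linear network. -/
noncomputable def linLoss (n : ℕ → ℕ) (H N : ℕ) (hout : n (H + 1) = 1)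
    (a : Fin N → EuclideanSpace ℝ (Fin (n 0)))
    (f : EuclideanSpace ℝ (Fin (n 0)) → ℝ) (W : WeightSpace n H) : ℝ :=
  (1 / (2 * (N : ℝ))) * ∑ i, (f (a i) - linOut n H hout W (a i)) ^ 2

/-- Regularized loss `ℓ_λ(W) = ℓ(W) + (λ/2)‖W‖²` of the deep linear network. -/
noncomputable def linLossReg (n : ℕ → ℕ) (H N : ℕ) (hout : n (H + 1) = 1)
    (a : Fin N → EuclideanSpace ℝ (Fin (n 0)))
    (f : EuclideanSpace ℝ (Fin (n 0)) → ℝ) (lam : ℝ) (W : WeightSpace n H) : ℝ :=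
  linLoss n H N hout a f W + lam / 2 * ‖W‖ ^ 2

/-- The `i`-th weight matrix `W_i` of a weight vector `W`. -/
def block (n : ℕ → ℕ) (H : ℕ) (W : WeightSpace n H) (i : Fin (H + 1)) :
    Matrix (Fin (n i)) (Fin (n (i + 1))) ℝ :=
  Matrix.of fun j k => W ⟨i, (j, k)⟩

/-- Operator norm (induced by the Euclidean norms) of a matrix. -/
noncomputable def opNorm2 {p q : ℕ} (M : Matrix (Fin p) (Fin q) ℝ) : ℝ :=
  ‖LinearMap.toContinuousLinearMap (Matrix.toEuclideanLin M)‖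

/-- `‖W‖_* = max_i ‖W_i‖₂`. -/
noncomputable def starNorm (n : ℕ → ℕ) (H : ℕ) (W : WeightSpace n H) : ℝ :=
  ⨆ i : Fin (H + 1), opNorm2 (block n H W i)

lemma norm_sq_eq_sum' {ι : Type*} [Fintype ι] (x : EuclideanSpace ℝ ι) :
    ‖x‖ ^ 2 = ∑ i, x i ^ 2 := by
  rw [EuclideanSpace.norm_eq, Real.sq_sqrt (by positivity)]
  simp [Real.norm_eq_abs, sq_abs]

lemma opNorm2_nonneg {p q : ℕ} (M : Matrix (Fin p) (Fin q) ℝ) : 0 ≤ opNorm2 M :=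
  norm_nonneg _

lemma toEuclideanLin_norm_le {p q : ℕ} (M : Matrix (Fin p) (Fin q) ℝ)
    (x : EuclideanSpace ℝ (Fin q)) :
    ‖Matrix.toEuclideanLin M x‖ ≤ opNorm2 M * ‖x‖ := by
  simpa [opNorm2] using (LinearMap.toContinuousLinearMap (Matrix.toEuclideanLin M)).le_opNorm x

lemma toEuclideanLin_apply' {p q : ℕ} (M : Matrix (Fin p) (Fin q) ℝ)
    (x : EuclideanSpace ℝ (Fin q)) (l : Fin p) :
    Matrix.toEuclideanLin M x l = ∑ j, M l j * x j := by
  simp [Matrix.toEuclideanLin_apply, Matrix.mulVec, dotProduct]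

lemma transpose_norm_le {p q : ℕ} (M : Matrix (Fin p) (Fin q) ℝ)
    (v : EuclideanSpace ℝ (Fin p)) (u : EuclideanSpace ℝ (Fin q))
    (hu : ∀ j, u j = ∑ l, M l j * v l) :
    ‖u‖ ≤ opNorm2 M * ‖v‖ := by
  have key : ‖u‖ ^ 2 ≤ (opNorm2 M * ‖v‖) * ‖u‖ := by
    have h1 : ‖u‖ ^ 2 = inner ℝ v (Matrix.toEuclideanLin M u) := by
      rw [← real_inner_self_eq_norm_sq, PiLp.inner_apply, PiLp.inner_apply]
      simp only [RCLike.inner_apply, starRingEnd_apply, star_trivial]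
      calc ∑ j, u j * u j = ∑ j, u j * (∑ l, M l j * v l) := by
            refine Finset.sum_congr rfl fun j _ => by rw [hu j]
        _ = ∑ l, ∑ j, v l * (M l j * u j) := by
            rw [Finset.sum_comm]
            exact Finset.sum_congr rfl fun j _ => by rw [Finset.mul_sum]; exact Finset.sum_congr rfl fun l _ => by ring
        _ = ∑ l, v l * Matrix.toEuclideanLin M u l := by
            refine Finset.sum_congr rfl fun l _ => ?_
            rw [toEuclideanLin_apply', Finset.mul_sum]
        _ = ∑ l, Matrix.toEuclideanLin M u l * v l := Finset.sum_congr rfl fun l _ => mul_comm _ _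
    have h2 : inner ℝ v (Matrix.toEuclideanLin M u) ≤ ‖v‖ * ‖Matrix.toEuclideanLin M u‖ :=
      real_inner_le_norm _ _
    have h3 := toEuclideanLin_norm_le M u
    nlinarith [norm_nonneg v]
  rcases eq_or_lt_of_le (norm_nonneg u) with h | h
  · rw [← h]; exact mul_nonneg (opNorm2_nonneg M) (norm_nonneg v)
  · nlinarith

lemma abs_coord_le {ι : Type*} [Fintype ι] (x : EuclideanSpace ℝ ι) (l : ι) :
    |x l| ≤ ‖x‖ := by
  rw [EuclideanSpace.norm_eq, ← Real.sqrt_sq_eq_abs]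
  apply Real.sqrt_le_sqrt
  have : x l ^ 2 = ‖x l‖ ^ 2 := by simp [Real.norm_eq_abs, sq_abs]
  rw [this]
  exact Finset.single_le_sum (f := fun i => ‖x i‖ ^ 2) (fun i _ => by positivity) (Finset.mem_univ l)

lemma opNorm2_le_frob {p q : ℕ} (M : Matrix (Fin p) (Fin q) ℝ) :
    opNorm2 M ≤ Real.sqrt (∑ l, ∑ j, M l j ^ 2) := by
  apply ContinuousLinearMap.opNorm_le_bound _ (Real.sqrt_nonneg _)
  intro x
  have hx : ‖Matrix.toEuclideanLin M x‖ ^ 2 ≤ (∑ l, ∑ j, M l j ^ 2) * ‖x‖ ^ 2 := by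
    rw [norm_sq_eq_sum', norm_sq_eq_sum', Finset.sum_mul]
    refine Finset.sum_le_sum fun l _ => ?_
    rw [toEuclideanLin_apply']
    exact Finset.sum_mul_sq_le_sq_mul_sq Finset.univ _ _
  have h0 : ‖Matrix.toEuclideanLin M x‖ = Real.sqrt (‖Matrix.toEuclideanLin M x‖ ^ 2) := by
    rw [Real.sqrt_sq (norm_nonneg _)]
  calc ‖LinearMap.toContinuousLinearMap (Matrix.toEuclideanLin M) x‖
      = Real.sqrt (‖Matrix.toEuclideanLin M x‖ ^ 2) := by simpa using h0
    _ ≤ Real.sqrt ((∑ l, ∑ j, M l j ^ 2) * ‖x‖ ^ 2) := Real.sqrt_le_sqrt hx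
    _ = Real.sqrt (∑ l, ∑ j, M l j ^ 2) * ‖x‖ := by
        rw [Real.sqrt_mul (by positivity), Real.sqrt_sq (norm_nonneg _)]

section NetAux
variable (n : ℕ → ℕ) (H : ℕ) (W : WeightSpace n H)

lemma block_le_starNorm (i : Fin (H + 1)) : opNorm2 (block n H W i) ≤ starNorm n H W := by
  unfold starNorm
  exact le_ciSup (f := fun i : Fin (H + 1) => opNorm2 (block n H W i)) (Finite.bddAbove_range _) i

lemma starNorm_nonneg : 0 ≤ starNorm n H W :=
  le_trans (opNorm2_nonneg (block n H W 0)) (block_le_starNorm n H W 0)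

lemma linAct_norm_le (a : EuclideanSpace ℝ (Fin (n 0))) :
    ∀ (k : ℕ) (hk : k ≤ H + 1),
      Real.sqrt (∑ j, (linAct n H W a k hk j) ^ 2) ≤ starNorm n H W ^ k * ‖a‖
  | 0, _ => by
      have : Real.sqrt (∑ j, (a j) ^ 2) = ‖a‖ := by
        rw [EuclideanSpace.norm_eq]
        congr 1
        exact Finset.sum_congr rfl fun j _ => by simp [Real.norm_eq_abs, sq_abs]
      simp only [linAct, pow_zero, one_mul]
      exact le_of_eq this
  | k + 1, h => by
      set v : EuclideanSpace ℝ (Fin (n k)) := WithLp.toLp 2 (fun l => linAct n H W a k (Nat.le_of_succ_le h) l) with hv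
      set u : EuclideanSpace ℝ (Fin (n (k + 1))) := WithLp.toLp 2 (fun j => linAct n H W a (k + 1) h j) with hu2
      have hbd : ‖u‖ ≤ opNorm2 (block n H W ⟨k, h⟩) * ‖v‖ := by
        apply transpose_norm_le
        intro j
        simp only [hu2, hv, PiLp.toLp_apply, linAct, block, Matrix.of_apply]
      have hnu : ‖u‖ = Real.sqrt (∑ j, (linAct n H W a (k + 1) h j) ^ 2) := by
        rw [EuclideanSpace.norm_eq]
        congr 1
        exact Finset.sum_congr rfl fun j _ => by simp [hu2, Real.norm_eq_abs, sq_abs]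
      have hnv : ‖v‖ = Real.sqrt (∑ l, (linAct n H W a k (Nat.le_of_succ_le h) l) ^ 2) := by
        rw [EuclideanSpace.norm_eq]
        congr 1
        exact Finset.sum_congr rfl fun l _ => by simp [hv, Real.norm_eq_abs, sq_abs]
      have ih := linAct_norm_le a k (Nat.le_of_succ_le h)
      rw [← hnu]
      calc ‖u‖ ≤ opNorm2 (block n H W ⟨k, h⟩) * ‖v‖ := hbd
        _ ≤ starNorm n H W * (starNorm n H W ^ k * ‖a‖) := by
            apply mul_le_mul (block_le_starNorm n H W ⟨k, h⟩) _ (norm_nonneg v) (starNorm_nonneg n H W)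
            rw [hnv]; exact ih
        _ = starNorm n H W ^ (k + 1) * ‖a‖ := by ring

lemma linOut_abs_le (hout : n (H + 1) = 1) (a : EuclideanSpace ℝ (Fin (n 0))) :
    |linOut n H hout W a| ≤ starNorm n H W ^ (H + 1) * ‖a‖ := by
  have h := linAct_norm_le n H W a (H + 1) le_rfl
  have h2 : |linOut n H hout W a| ≤ Real.sqrt (∑ j, (linAct n H W a (H + 1) le_rfl j) ^ 2) := by
    rw [← Real.sqrt_sq_eq_abs]
    apply Real.sqrt_le_sqrt
    exact Finset.single_le_sum (f := fun j => (linAct n H W a (H + 1) le_rfl j) ^ 2)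
      (fun j _ => sq_nonneg _) (Finset.mem_univ _)
  exact h2.trans h

lemma entry_abs_le_starNorm (idx : WeightIdx n H) : |W idx| ≤ starNorm n H W := by
  obtain ⟨i, l, j⟩ := idx
  have h1 : |W ⟨i, (l, j)⟩| = |block n H W i l j| := rfl
  have h2 : |block n H W i l j| ≤ opNorm2 (block n H W i) := by
    have hx := toEuclideanLin_norm_le (block n H W i) (EuclideanSpace.single j 1)
    have hc : Matrix.toEuclideanLin (block n H W i) (EuclideanSpace.single j 1) l
        = block n H W i l j := by
      rw [toEuclideanLin_apply']
      simp [EuclideanSpace.single_apply]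
    have := abs_coord_le (Matrix.toEuclideanLin (block n H W i) (EuclideanSpace.single j 1)) l
    rw [hc] at this
    refine this.trans (hx.trans ?_)
    simp [EuclideanSpace.norm_single]
  rw [h1]; exact h2.trans (block_le_starNorm n H W i)

end NetAux

section Scale
variable (n : ℕ → ℕ) (H : ℕ) (W : WeightSpace n H)

/-- `W` with block `i` scaled by `t`. -/
def scaleW (i : Fin (H + 1)) (t : ℝ) : WeightSpace n H :=
  WithLp.toLp 2 (fun idx => if idx.1 = i then t * W idx else W idx)

/-- The direction vector equal to `W` on block `i` and `0` elsewhere. -/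
def dirW (i : Fin (H + 1)) : WeightSpace n H :=
  WithLp.toLp 2 (fun idx => if idx.1 = i then W idx else 0)

lemma scaleW_one (i : Fin (H + 1)) : scaleW n H W i 1 = W := by
  ext idx; by_cases h : idx.1 = i <;> simp [scaleW, h]

lemma hasDerivAt_scaleW (i : Fin (H + 1)) :
    HasDerivAt (fun t => scaleW n H W i t) (dirW n H W i) 1 := by
  have hfun : (fun t : ℝ => scaleW n H W i t)
      = fun t : ℝ => t • dirW n H W i
          + (show WeightSpace n H from WithLp.toLp 2 (fun idx => if idx.1 = i then 0 else W idx)) := by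
    funext t; ext idx
    by_cases h : idx.1 = i <;>
      simp [scaleW, dirW, h, PiLp.add_apply, PiLp.smul_apply, smul_eq_mul]
  rw [hfun]
  simpa using ((hasDerivAt_id (1 : ℝ)).smul_const (dirW n H W i)).add_const
    (WithLp.toLp 2 (fun idx => if idx.1 = i then 0 else W idx) : WeightSpace n H)

lemma linAct_scaleW (a : EuclideanSpace ℝ (Fin (n 0))) (i : Fin (H + 1)) (t : ℝ) :
    ∀ (k : ℕ) (hk : k ≤ H + 1) (j : Fin (n k)),
      linAct n H (scaleW n H W i t) a k hk j
        = (if (i : ℕ) < k then t else 1) * linAct n H W a k hk j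
  | 0, hk, j => by simp [linAct]
  | k + 1, h, j => by
      have ih := linAct_scaleW a i t k (Nat.le_of_succ_le h)
      simp only [linAct]
      rw [Finset.mul_sum]
      refine Finset.sum_congr rfl fun l _ => ?_
      rw [ih l]
      have hsc : scaleW n H W i t ⟨⟨k, h⟩, (l, j)⟩
          = (if (i : ℕ) = k then t else 1) * W ⟨⟨k, h⟩, (l, j)⟩ := by
        simp only [scaleW]
        by_cases hik : (⟨k, h⟩ : Fin (H + 1)) = i
        · have h2 : (i : ℕ) = k := by rw [← hik]
          simp [hik, h2]
        · have h2 : ¬ (i : ℕ) = k := fun hc => hik (Fin.ext hc.symm)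
          simp [hik, h2]
      rw [hsc]
      split_ifs with h1 h2 h3 h4 h5 h6 <;> first | ring1 | (exfalso; omega)

lemma linOut_scaleW (hout : n (H + 1) = 1) (a : EuclideanSpace ℝ (Fin (n 0)))
    (i : Fin (H + 1)) (t : ℝ) :
    linOut n H hout (scaleW n H W i t) a = t * linOut n H hout W a := by
  unfold linOut
  rw [linAct_scaleW, if_pos i.isLt]

lemma A_eq_frob (i : Fin (H + 1)) :
    (∑ idx : WeightIdx n H, if idx.1 = i then W idx ^ 2 else 0)
      = ∑ l, ∑ j, block n H W i l j ^ 2 := by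
  rw [← Finset.univ_sigma_univ, Finset.sum_sigma]
  rw [Finset.sum_eq_single i]
  · rw [Fintype.sum_prod_type]
    simp [block]
  · intro b _ hb
    simp [hb]
  · intro h; exact absurd (Finset.mem_univ i) h

lemma sum_A_eq_norm_sq :
    (∑ i, ∑ idx : WeightIdx n H, if idx.1 = i then W idx ^ 2 else 0) = ‖W‖ ^ 2 := by
  rw [norm_sq_eq_sum', Finset.sum_comm]
  refine Finset.sum_congr rfl fun idx _ => ?_
  simp

lemma norm_scaleW_sq (i : Fin (H + 1)) (t : ℝ) :
    ‖scaleW n H W i t‖ ^ 2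
      = t ^ 2 * (∑ idx : WeightIdx n H, if idx.1 = i then W idx ^ 2 else 0)
        + (∑ idx : WeightIdx n H, if idx.1 = i then 0 else W idx ^ 2) := by
  rw [norm_sq_eq_sum', Finset.mul_sum, ← Finset.sum_add_distrib]
  refine Finset.sum_congr rfl fun idx _ => ?_
  by_cases h : idx.1 = i <;> simp [scaleW, h] <;> ring

end Scale

set_option maxHeartbeats 1000000

/-- for a deep linear network with `H ≥ 1` hidden layers (all hidden
widths `> 1`), the regularized loss `ℓ_λ` has no non-zero critical points in
`U(λ) = {W : ℓ(W)^{1/2} ‖W‖_*^{H−1} < λ/(√2·H(H+1)·r)}`. -/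
theorem linear_network_no_nonzero_critical_points (n : ℕ → ℕ) (H : ℕ) (hH : 1 ≤ H)
    (hout : n (H + 1) = 1) (hwidth : ∀ i, 1 ≤ i → i ≤ H → 1 < n i)
    (N : ℕ) (a : Fin N → EuclideanSpace ℝ (Fin (n 0)))
    (f : EuclideanSpace ℝ (Fin (n 0)) → ℝ)
    (r lam : ℝ) (hr : 0 < r) (hlam : 0 < lam) (hnorm : ∀ i, ‖a i‖ ≤ r)
    (W : WeightSpace n H)
    (hU : Real.sqrt (linLoss n H N hout a f W) * starNorm n H W ^ (H - 1) <
      lam / (Real.sqrt 2 * ((H : ℝ) * ((H : ℝ) + 1)) * r))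
    (hdiff : DifferentiableAt ℝ (linLossReg n H N hout a f lam) W)
    (hcrit : fderiv ℝ (linLossReg n H N hout a f lam) W = 0) :
    W = 0 := by
  classical
  by_contra hW0
  set S := starNorm n H W with hSdef
  set y : Fin N → ℝ := fun j => linOut n H hout W (a j) with hy
  set L := linLoss n H N hout a f W with hLdef
  set A : Fin (H + 1) → ℝ :=
    fun i => ∑ idx : WeightIdx n H, if idx.1 = i then W idx ^ 2 else 0 with hA
  set c : ℝ := (1 / (2 * (N : ℝ))) * ∑ j, 2 * (f (a j) - y j) * y j with hcdef
  have hS0 : 0 ≤ S := starNorm_nonneg n H W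
  have hL0 : 0 ≤ L := by
    rw [hLdef, linLoss]; positivity
  -- Step A: per-layer identity lam * A i = c
  have key : ∀ i : Fin (H + 1), lam * A i = c := by
    intro i
    have hg := hasDerivAt_scaleW n H W i
    have hF1 : HasFDerivAt (linLossReg n H N hout a f lam)
        (fderiv ℝ (linLossReg n H N hout a f lam) W) (scaleW n H W i 1) := by
      rw [scaleW_one]; exact hdiff.hasFDerivAt
    have h1 : HasDerivAt (linLossReg n H N hout a f lam ∘ fun t => scaleW n H W i t) 0 1 := by
      have h := hF1.comp_hasDerivAt 1 hg
      rw [hcrit] at h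
      simpa using h
    have heq : (linLossReg n H N hout a f lam ∘ fun t => scaleW n H W i t)
        = fun t => (1 / (2 * (N : ℝ))) * (∑ j, (f (a j) - t * y j) ^ 2)
            + lam / 2 * (t ^ 2 * A i
              + ∑ idx : WeightIdx n H, if idx.1 = i then 0 else W idx ^ 2) := by
      funext t
      simp only [Function.comp, linLossReg, linLoss]
      rw [norm_scaleW_sq, hA]
      congr 2
      refine Finset.sum_congr rfl fun j _ => ?_
      rw [linOut_scaleW]
    have h2 : HasDerivAt (fun t => (1 / (2 * (N : ℝ))) * (∑ j, (f (a j) - t * y j) ^ 2)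
            + lam / 2 * (t ^ 2 * A i
              + ∑ idx : WeightIdx n H, if idx.1 = i then 0 else W idx ^ 2))
        ((1 / (2 * (N : ℝ))) * (∑ j, (2 : ℕ) * (f (a j) - 1 * y j) ^ (2 - 1) * (-(y j)))
          + lam / 2 * ((2 : ℕ) * (1 : ℝ) ^ (2 - 1) * A i)) 1 := by
      apply HasDerivAt.add
      · apply HasDerivAt.const_mul
        apply HasDerivAt.fun_sum
        intro j _
        exact ((hasDerivAt_mul_const (y j)).const_sub (f (a j))).pow 2
      · exact (((hasDerivAt_pow 2 (1 : ℝ)).mul_const (A i)).add_const _).const_mul _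
    rw [heq] at h1
    have h0 := h1.unique h2
    have hsum : (∑ j, (2 : ℕ) * (f (a j) - 1 * y j) ^ (2 - 1) * (-(y j)))
        = -(∑ j, 2 * (f (a j) - y j) * y j) := by
      rw [← Finset.sum_neg_distrib]
      refine Finset.sum_congr rfl fun j _ => ?_
      push_cast
      ring
    rw [hsum] at h0
    have h0' : 0 = (1 / (2 * (N : ℝ))) * (-(∑ j, 2 * (f (a j) - y j) * y j))
        + lam * A i := by
      rw [h0]; push_cast; ring
    rw [hcdef]
    linarith
  have hAnonneg : ∀ i, 0 ≤ A i := by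
    intro i
    rw [hA]
    refine Finset.sum_nonneg fun idx _ => ?_
    split_ifs
    · exact sq_nonneg _
    · exact le_rfl
  have hc0 : 0 ≤ c := by
    rw [← key 0]; exact mul_nonneg hlam.le (hAnonneg 0)
  -- Step B: lam * ‖W‖² = (H+1) * c
  have hsumA : (∑ i, A i) = ‖W‖ ^ 2 := by
    rw [hA]; exact sum_A_eq_norm_sq n H W
  have hWsq : lam * ‖W‖ ^ 2 = ((H : ℝ) + 1) * c := by
    calc lam * ‖W‖ ^ 2 = ∑ i, lam * A i := by rw [← hsumA, Finset.mul_sum]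
      _ = ∑ _i : Fin (H + 1), c := Finset.sum_congr rfl fun i _ => key i
      _ = ((H : ℝ) + 1) * c := by
          rw [Finset.sum_const, Finset.card_univ, Fintype.card_fin, nsmul_eq_mul]
          push_cast; ring
  -- W ≠ 0 consequences
  have hWpos : 0 < ‖W‖ := norm_pos_iff.mpr hW0
  have hcpos : 0 < c := by nlinarith [hWsq, mul_pos hlam (pow_pos hWpos 2)]
  have hSpos : 0 < S := by
    rcases hS0.lt_or_eq with h | h
    · exact h
    · exfalso
      apply hW0
      ext idx
      have h1 := entry_abs_le_starNorm n H W idx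
      rw [hSdef] at h
      have : |W idx| ≤ 0 := h1.trans_eq h.symm
      have h2 : W idx = 0 := abs_nonpos_iff.mp this
      simpa using h2
  -- Step D: lam * S² ≤ c
  have hlamS : lam * S ^ 2 ≤ c := by
    have hSle : S ≤ Real.sqrt (c / lam) := by
      rw [hSdef]
      unfold starNorm
      apply ciSup_le
      intro i
      have h1 : opNorm2 (block n H W i) ≤ Real.sqrt (A i) := by
        have h2 := opNorm2_le_frob (block n H W i)
        have h3 : A i = ∑ l, ∑ j, block n H W i l j ^ 2 := by
          rw [hA]; exact A_eq_frob n H W i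
        rwa [← h3] at h2
      have h4 : A i = c / lam := by
        field_simp
        linarith [key i]
      rwa [h4] at h1
    have h5 : S ^ 2 ≤ c / lam := by
      have := pow_le_pow_left₀ hS0 hSle 2
      rwa [Real.sq_sqrt (div_nonneg hc0 hlam.le)] at this
    calc lam * S ^ 2 ≤ lam * (c / lam) := by nlinarith
      _ = c := by field_simp
  -- Step C: c ≤ √(2L) * (r * S^(H+1))
  have hybound : ∀ j, |y j| ≤ S ^ (H + 1) * r := by
    intro j
    refine (linOut_abs_le n H W hout (a j)).trans ?_
    exact mul_le_mul_of_nonneg_left (hnorm j) (pow_nonneg hS0 _)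
  have hcle : c ≤ Real.sqrt (2 * L) * (r * S ^ (H + 1)) := by
    have hrs0 : 0 ≤ r * S ^ (H + 1) := mul_nonneg hr.le (pow_nonneg hS0 _)
    have hcform : c = (N : ℝ)⁻¹ * ∑ j, (f (a j) - y j) * y j := by
      rw [hcdef]
      have : (∑ j, 2 * (f (a j) - y j) * y j) = 2 * ∑ j, (f (a j) - y j) * y j := by
        rw [Finset.mul_sum]
        exact Finset.sum_congr rfl fun j _ => by ring
      rw [this, mul_comm (2 : ℝ) (N : ℝ), one_div, mul_inv]
      ring
    rcases Nat.eq_zero_or_pos N with hN | hN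
    · subst hN
      rw [hcform]
      simp only [Finset.univ_eq_empty, Finset.sum_empty, mul_zero]
      positivity
    · have hNpos : (0 : ℝ) < N := by exact_mod_cast hN
      have hCS : (∑ j, (f (a j) - y j) * y j)
          ≤ Real.sqrt (∑ j, (f (a j) - y j) ^ 2) * Real.sqrt (∑ j, y j ^ 2) := by
        have h2 := Finset.sum_mul_sq_le_sq_mul_sq Finset.univ (fun j => f (a j) - y j) y
        calc (∑ j, (f (a j) - y j) * y j) ≤ |∑ j, (f (a j) - y j) * y j| := le_abs_self _
          _ = Real.sqrt ((∑ j, (f (a j) - y j) * y j) ^ 2) := (Real.sqrt_sq_eq_abs _).symm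
          _ ≤ Real.sqrt ((∑ j, (f (a j) - y j) ^ 2) * ∑ j, y j ^ 2) := Real.sqrt_le_sqrt h2
          _ = _ := Real.sqrt_mul (Finset.sum_nonneg fun j _ => sq_nonneg _) _
      have hy2 : (∑ j, y j ^ 2) ≤ (N : ℝ) * (r * S ^ (H + 1)) ^ 2 := by
        calc (∑ j, y j ^ 2) ≤ ∑ _j : Fin N, (r * S ^ (H + 1)) ^ 2 := by
              refine Finset.sum_le_sum fun j _ => ?_
              have h3 := hybound j
              calc y j ^ 2 = |y j| ^ 2 := (sq_abs _).symm
                _ ≤ (S ^ (H + 1) * r) ^ 2 := pow_le_pow_left₀ (abs_nonneg _) h3 2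
                _ = (r * S ^ (H + 1)) ^ 2 := by ring
          _ = (N : ℝ) * (r * S ^ (H + 1)) ^ 2 := by
              rw [Finset.sum_const, Finset.card_univ, Fintype.card_fin, nsmul_eq_mul]
      have hf2 : (∑ j, (f (a j) - y j) ^ 2) = 2 * (N : ℝ) * L := by
        rw [hLdef, linLoss]
        field_simp
        rfl
      have hsq2 : Real.sqrt (∑ j, (f (a j) - y j) ^ 2)
          = Real.sqrt (2 * L) * Real.sqrt (N : ℝ) := by
        rw [hf2, show (2 : ℝ) * (N : ℝ) * L = 2 * L * (N : ℝ) by ring,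
          Real.sqrt_mul (by positivity)]
      have hsqy : Real.sqrt (∑ j, y j ^ 2) ≤ Real.sqrt (N : ℝ) * (r * S ^ (H + 1)) := by
        refine (Real.sqrt_le_sqrt hy2).trans_eq ?_
        rw [Real.sqrt_mul (by positivity), Real.sqrt_sq hrs0]
      have hchain : (∑ j, (f (a j) - y j) * y j)
          ≤ (Real.sqrt (2 * L) * Real.sqrt (N : ℝ)) * (Real.sqrt (N : ℝ) * (r * S ^ (H + 1))) := by
        refine hCS.trans ?_
        rw [hsq2]
        exact mul_le_mul_of_nonneg_left hsqy (by positivity)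
      rw [hcform]
      have hNN : Real.sqrt (N : ℝ) * Real.sqrt (N : ℝ) = (N : ℝ) :=
        Real.mul_self_sqrt (by positivity)
      have hfin : (N : ℝ)⁻¹ * ((Real.sqrt (2 * L) * Real.sqrt (N : ℝ))
          * (Real.sqrt (N : ℝ) * (r * S ^ (H + 1))))
          = Real.sqrt (2 * L) * (r * S ^ (H + 1)) := by
        rw [show (Real.sqrt (2 * L) * Real.sqrt (N : ℝ))
            * (Real.sqrt (N : ℝ) * (r * S ^ (H + 1)))
            = (Real.sqrt (N : ℝ) * Real.sqrt (N : ℝ))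
              * (Real.sqrt (2 * L) * (r * S ^ (H + 1))) from by ring,
          hNN, inv_mul_cancel_left₀ (ne_of_gt hNpos)]
      calc (N : ℝ)⁻¹ * ∑ j, (f (a j) - y j) * y j
          ≤ (N : ℝ)⁻¹ * ((Real.sqrt (2 * L) * Real.sqrt (N : ℝ))
            * (Real.sqrt (N : ℝ) * (r * S ^ (H + 1)))) :=
            mul_le_mul_of_nonneg_left hchain (by positivity)
        _ = Real.sqrt (2 * L) * (r * S ^ (H + 1)) := hfin
  -- Step E: contradiction with hU
  have hpow : S ^ (H + 1) = S ^ (H - 1) * S ^ 2 := by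
    rw [← pow_add]
    congr 1
    omega
  have hlamle : lam ≤ Real.sqrt 2 * Real.sqrt L * r * S ^ (H - 1) := by
    have h6 : lam * S ^ 2 ≤ (Real.sqrt 2 * Real.sqrt L * r * S ^ (H - 1)) * S ^ 2 := by
      have h8 := hlamS.trans hcle
      rw [hpow] at h8
      have h9 : Real.sqrt (2 * L) = Real.sqrt 2 * Real.sqrt L :=
        Real.sqrt_mul (by norm_num) L
      rw [h9] at h8
      calc lam * S ^ 2 ≤ Real.sqrt 2 * Real.sqrt L * (r * (S ^ (H - 1) * S ^ 2)) := h8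
        _ = Real.sqrt 2 * Real.sqrt L * r * S ^ (H - 1) * S ^ 2 := by ring
    exact le_of_mul_le_mul_right h6 (pow_pos hSpos 2)
  have hdenom : Real.sqrt 2 * r ≤ Real.sqrt 2 * ((H : ℝ) * ((H : ℝ) + 1)) * r := by
    have h7 : (1 : ℝ) ≤ (H : ℝ) * ((H : ℝ) + 1) := by
      have : (1 : ℝ) ≤ (H : ℝ) := by exact_mod_cast hH
      nlinarith
    have h8 : (0 : ℝ) ≤ (Real.sqrt 2 * r) * ((H : ℝ) * ((H : ℝ) + 1) - 1) :=
      mul_nonneg (by positivity) (by linarith)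
    nlinarith [h8]
  have hsqrt2r : (0 : ℝ) < Real.sqrt 2 * r := by positivity
  have hdiv : lam / (Real.sqrt 2 * ((H : ℝ) * ((H : ℝ) + 1)) * r) ≤ lam / (Real.sqrt 2 * r) :=
    div_le_div_of_nonneg_left hlam.le hsqrt2r hdenom
  have hfinal : lam / (Real.sqrt 2 * r) ≤ Real.sqrt L * S ^ (H - 1) := by
    rw [div_le_iff₀ hsqrt2r]
    linarith [hlamle]
  linarith [hU, hdiv, hfinal]
end

section
/- Let F : ℝ^m → ℝ be C¹ on an open set O, let U ⊆ O, and suppose there exist finitely many closed sets B₁,…,B_L covering U, open sets V_i ⊇ B_i ∩ U, and C² functions ϕ_i : V_i → ℝ that are θ-strongly convex on V_i (Hessian ⪰ θ·I_m, θ > 0) with F = ϕ_i on B_i ∩ U. If W ∈ U is an interior point of U, ∇F(W) = 0, and a full neighbourhood of W is covered by those B_i that contain W (which holds for ε small since the B_j not containing W are closed), then W is an isolated local minimum of F. -/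
open scoped BigOperators RealInnerProductSpace

open Filter Set Metric InnerProductSpace Topology

/-- If two functions are differentiable at `c`, agree on a set `s ∋ c`, and `c` is an
accumulation point of `s`, then their derivatives at `c` agree. -/
private lemma hasDerivAt_eq_on_cluster {f g : ℝ → ℝ} {s : Set ℝ} {c a b : ℝ}
    (hf : HasDerivAt f a c) (hg : HasDerivAt g b c)
    (hne : (𝓝[s \ {c}] c).NeBot)
    (heqfg : ∀ t ∈ s, f t = g t) (hc : c ∈ s) : a = b := by
  have hFG : HasDerivAt (fun t => f t - g t) (a - b) c := hf.sub hg
  have h1 : Tendsto (slope (fun t => f t - g t) c) (𝓝[s \ {c}] c) (𝓝 (a - b)) :=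
    (hasDerivAt_iff_tendsto_slope.1 hFG).mono_left
      (nhdsWithin_mono c fun t ht => ht.2)
  have h2 : Tendsto (slope (fun t => f t - g t) c) (𝓝[s \ {c}] c) (𝓝 0) := by
    have hev : (slope (fun t => f t - g t) c) =ᶠ[𝓝[s \ {c}] c] (fun _ => 0) := by
      filter_upwards [eventually_mem_nhdsWithin] with t ht
      have h3 : f t - g t = 0 := by rw [heqfg t ht.1]; ring
      have h4 : f c - g c = 0 := by rw [heqfg c hc]; ring
      simp [slope_def_field, h3, h4]
    exact Tendsto.congr' hev.symm tendsto_const_nhds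
  have := tendsto_nhds_unique h1 h2
  linarith

set_option maxHeartbeats 1000000 in
/-- abstract core of the critical point lemma: let `F` be `C¹` on an
open set `O ⊇ U`, with finitely many closed sets `Bᵢ` covering `U`, open sets
`Vᵢ ⊇ Bᵢ ∩ U`, and `C²` functions `ϕᵢ` on `Vᵢ` that are `θ`-strongly convex
(`ϕᵢ(x') ≥ ϕᵢ(x) + ⟨∇ϕᵢ(x), x'−x⟩ + (θ/2)‖x'−x‖²` on convex subsets of `Vᵢ`) with
`F = ϕᵢ` on `Bᵢ ∩ U`.  If `W` is an interior point of `U` with `∇F(W) = 0` and a full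
neighbourhood of `W` is covered by those `Bᵢ` containing `W`, then `W` is an isolated
local minimum of `F`. -/
theorem isolated_local_min_of_piecewise_strong_convexity (m : ℕ)
    (F : EuclideanSpace ℝ (Fin m) → ℝ)
    (O U : Set (EuclideanSpace ℝ (Fin m))) (hO : IsOpen O) (hUO : U ⊆ O)
    (hF : ContDiffOn ℝ 1 F O)
    (θ : ℝ) (hθ : 0 < θ) (L : ℕ)
    (B V : Fin L → Set (EuclideanSpace ℝ (Fin m)))
    (φ : Fin L → EuclideanSpace ℝ (Fin m) → ℝ)
    (hB : ∀ i, IsClosed (B i)) (hcover : U ⊆ ⋃ i, B i)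
    (hV : ∀ i, IsOpen (V i)) (hBV : ∀ i, B i ∩ U ⊆ V i)
    (hφ : ∀ i, ContDiffOn ℝ 2 (φ i) (V i))
    (hconv : ∀ i, ∀ s : Set (EuclideanSpace ℝ (Fin m)), s ⊆ V i → Convex ℝ s →
      ∀ x ∈ s, ∀ x' ∈ s,
        φ i x + ⟪gradient (φ i) x, x' - x⟫ + θ / 2 * ‖x' - x‖ ^ 2 ≤ φ i x')
    (heq : ∀ i, Set.EqOn F (φ i) (B i ∩ U))
    (W : EuclideanSpace ℝ (Fin m)) (hWU : W ∈ U) (hWint : W ∈ interior U)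
    (hgrad : gradient F W = 0)
    (hnbhd : ∃ ε > 0, ∀ x ∈ Metric.ball W ε, ∃ i, W ∈ B i ∧ x ∈ B i) :
    ∃ ε > 0, ∀ x : EuclideanSpace ℝ (Fin m), 0 < ‖x - W‖ → ‖x - W‖ < ε →
      F W < F x := by
  classical
  obtain ⟨ε₀, hε₀, hcov⟩ := hnbhd
  set K : Set (EuclideanSpace ℝ (Fin m)) := ⋂ j, if W ∈ B j then V j else Set.univ
    with hKdef
  have hKopen : IsOpen K := by
    refine isOpen_iInter_of_finite fun j => ?_
    by_cases h : W ∈ B j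
    · simpa [h] using hV j
    · simp [h]
  have hWK : W ∈ K := by
    refine mem_iInter.2 fun j => ?_
    by_cases h : W ∈ B j
    · simpa [h] using hBV j ⟨h, hWU⟩
    · simp [h]
  obtain ⟨ε₁, hε₁, hballK⟩ := Metric.isOpen_iff.1 hKopen W hWK
  obtain ⟨ε₂, hε₂, hballI⟩ := Metric.isOpen_iff.1 isOpen_interior W hWint
  set ε := min ε₀ (min ε₁ ε₂) with hεdef
  have hεpos : 0 < ε := lt_min hε₀ (lt_min hε₁ hε₂)
  refine ⟨ε, hεpos, ?_⟩
  intro x hx0 hxε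
  set v := x - W with hvdef
  set d := ‖v‖ with hddef
  have hd0 : 0 < d := hx0
  set γ : ℝ → EuclideanSpace ℝ (Fin m) := fun t => W + t • v with hγdef
  have hγ0 : γ 0 = W := by simp [hγdef]
  have hγ1 : γ 1 = x := by simp [hγdef, hvdef]
  have hγcont : Continuous γ := by
    exact continuous_const.add (continuous_id.smul continuous_const)
  have hγmem : ∀ t ∈ Icc (0:ℝ) 1, γ t ∈ ball W ε := by
    intro t ht
    rw [mem_ball_iff_norm]
    have h1 : γ t - W = t • v := by simp [hγdef]
    rw [h1, norm_smul]
    calc ‖t‖ * ‖v‖ ≤ 1 * ‖v‖ := by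
          refine mul_le_mul_of_nonneg_right ?_ (norm_nonneg v)
          rw [Real.norm_eq_abs, abs_le]; exact ⟨by linarith [ht.1], ht.2⟩
      _ = d := by rw [one_mul]
      _ < ε := hxε
  have hballU : ball W ε ⊆ U := fun y hy => interior_subset (hballI
    (ball_subset_ball (le_trans (min_le_right _ _) (min_le_right _ _)) hy))
  have hballO : ball W ε ⊆ O := fun y hy => hUO (hballU hy)
  have hballV : ∀ j, W ∈ B j → ball W ε ⊆ V j := by
    intro j hj y hy
    have h1 : y ∈ K := hballK
      (ball_subset_ball (le_trans (min_le_right _ _) (min_le_left _ _)) hy)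
    have h2 := mem_iInter.1 h1 j
    simpa [hj] using h2
  have hballB : ∀ y ∈ ball W ε, ∃ i, W ∈ B i ∧ y ∈ B i := fun y hy =>
    hcov y (ball_subset_ball (min_le_left _ _) hy)
  set ψ : ℝ → ℝ := fun t => F (γ t) with hψdef
  set μ' : ℝ := θ * d ^ 2 / 4 with hμdef
  have hμpos : 0 < μ' := by rw [hμdef]; positivity
  have hγder : ∀ s : ℝ, HasDerivAt γ v s := by
    intro s
    have h1 : HasDerivAt (fun t : ℝ => t • v) ((1:ℝ) • v) s := (hasDerivAt_id s).smul_const v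
    have h2 := h1.const_add W
    simpa [hγdef] using h2
  -- Step A : the key "uniform convexity along the segment" estimate
  have key : ∀ t ∈ Icc (0:ℝ) 1,
      ψ t + (μ' * (t * (1 - t)) - ((1 - t) * ψ 0 + t * ψ 1)) ≤ 0 := by
    set S : ℝ → ℝ := fun t => ψ t + (μ' * (t * (1 - t)) - ((1 - t) * ψ 0 + t * ψ 1))
      with hSdef
    have hψcont : ContinuousOn ψ (Icc 0 1) :=
      hF.continuousOn.comp hγcont.continuousOn (fun t ht => hballO (hγmem t ht))
    have hScont : ContinuousOn S (Icc 0 1) := by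
      refine hψcont.add (Continuous.continuousOn ?_)
      exact ((continuous_const.mul (continuous_id.mul (continuous_const.sub continuous_id))).sub
        (((continuous_const.sub continuous_id).mul continuous_const).add
          (continuous_id.mul continuous_const)))
    obtain ⟨c, hcmem, hcmax⟩ := isCompact_Icc.exists_isMaxOn
      (nonempty_Icc.mpr zero_le_one) hScont
    suffices hSc : S c ≤ 0 by
      intro t ht; exact le_trans (hcmax ht) hSc
    by_contra hpos
    push_neg at hpos
    have hS0 : S 0 = 0 := by simp only [hSdef]; ring
    have hS1 : S 1 = 0 := by simp only [hSdef]; ring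
    have hc0 : c ≠ 0 := by
      intro h; rw [h, hS0] at hpos; exact lt_irrefl 0 hpos
    have hc1 : c ≠ 1 := by
      intro h; rw [h, hS1] at hpos; exact lt_irrefl 0 hpos
    have hcIoo : c ∈ Ioo (0:ℝ) 1 :=
      ⟨lt_of_le_of_ne hcmem.1 (Ne.symm hc0), lt_of_le_of_ne hcmem.2 hc1⟩
    have hlocmax : IsLocalMax S c := hcmax.isLocalMax (Icc_mem_nhds hcIoo.1 hcIoo.2)
    set T : Fin L → Set ℝ := fun j => {t | t ∈ Icc (0:ℝ) 1 ∧ W ∈ B j ∧ γ t ∈ B j}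
      with hTdef
    have hexj : ∃ j, c ∈ closure (T j \ {c}) := by
      by_contra hnone
      push_neg at hnone
      have hCclosed : IsClosed (⋃ j, closure (T j \ {c})) :=
        isClosed_iUnion_of_finite fun j => isClosed_closure
      have hcmem' : c ∈ (⋃ j, closure (T j \ {c}))ᶜ ∩ Ioo 0 1 :=
        ⟨by simpa using hnone, hcIoo⟩
      obtain ⟨δ, hδ, hballc⟩ := Metric.isOpen_iff.1
        (hCclosed.isOpen_compl.inter isOpen_Ioo) c hcmem'
      have h1c : 0 < 1 - c := by linarith [hcIoo.2]
      have hmin : 0 < min δ (1 - c) := lt_min hδ h1c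
      set t₁ := c + min δ (1 - c) / 2 with ht₁def
      have ht₁c : t₁ ≠ c := by rw [ht₁def]; intro h; nlinarith
      have ht₁ball : t₁ ∈ ball c δ := by
        rw [mem_ball_iff_norm, ht₁def]
        simp only [add_sub_cancel_left]
        rw [Real.norm_eq_abs, abs_of_pos (by linarith)]
        have := min_le_left δ (1 - c)
        linarith
      obtain ⟨hcomp, hIoo⟩ := hballc ht₁ball
      have ht₁Icc : t₁ ∈ Icc (0:ℝ) 1 := ⟨le_of_lt hIoo.1, le_of_lt hIoo.2⟩
      obtain ⟨i, hiW, hiB⟩ := hballB (γ t₁) (hγmem t₁ ht₁Icc)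
      exact hcomp (mem_iUnion.2 ⟨i, subset_closure ⟨⟨ht₁Icc, hiW, hiB⟩, ht₁c⟩⟩)
    obtain ⟨j, hj⟩ := hexj
    have hTclosed : IsClosed (T j) := by
      by_cases h : W ∈ B j
      · have hTeq : T j = Icc (0:ℝ) 1 ∩ γ ⁻¹' B j := by
          ext t; simp only [hTdef, mem_setOf_eq, mem_inter_iff, mem_preimage, h, true_and]
        rw [hTeq]; exact isClosed_Icc.inter ((hB j).preimage hγcont)
      · have hTeq : T j = ∅ := by
          ext t; simp [hTdef, h]
        rw [hTeq]; exact isClosed_empty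
    have hcT : c ∈ T j := hTclosed.closure_subset ((closure_mono diff_subset) hj)
    have hWBj : W ∈ B j := hcT.2.1
    have hneB : (𝓝[T j \ {c}] c).NeBot := mem_closure_iff_nhdsWithin_neBot.1 hj
    have heqT : ∀ t ∈ T j, ψ t = φ j (γ t) := fun t ht =>
      heq j ⟨ht.2.2, hballU (hγmem t ht.1)⟩
    have hγcball : γ c ∈ ball W ε := hγmem c hcmem
    have hFdiffc : DifferentiableAt ℝ F (γ c) :=
      (hF.differentiableOn one_ne_zero).differentiableAt (hO.mem_nhds (hballO hγcball))
    have hψder : HasDerivAt ψ (fderiv ℝ F (γ c) v) c := by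
      have h1 : HasDerivAt (fun t => F (γ t)) (fderiv ℝ F (γ c) v) c :=
        hFdiffc.hasFDerivAt.comp_hasDerivAt c (hγder c)
      simpa [hψdef] using h1
    have hφdiffc : DifferentiableAt ℝ (φ j) (γ c) :=
      ((hφ j).differentiableOn (by norm_num)).differentiableAt
        ((hV j).mem_nhds (hballV j hWBj hγcball))
    set A : ℝ := ⟪gradient (φ j) (γ c), v⟫ with hAdef
    have hgder : HasDerivAt (fun t => φ j (γ t)) A c := by
      have h1 : HasFDerivAt (φ j) (toDual ℝ _ (gradient (φ j) (γ c))) (γ c) :=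
        hasGradientAt_iff_hasFDerivAt.1 hφdiffc.hasGradientAt
      have h2 : HasDerivAt (fun t => φ j (γ t)) (toDual ℝ _ (gradient (φ j) (γ c)) v) c :=
        h1.comp_hasDerivAt c (hγder c)
      simpa [hAdef, toDual_apply_apply] using h2
    have hqder : HasDerivAt (fun t : ℝ => μ' * (t * (1 - t)) - ((1 - t) * ψ 0 + t * ψ 1))
        (μ' * (1 - 2 * c) - (ψ 1 - ψ 0)) c := by
      have h1 : HasDerivAt (fun t : ℝ => t * (1 - t)) (1 - 2 * c) c := by
        have h : HasDerivAt (fun t : ℝ => t * (1 - t)) _ c :=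
          (hasDerivAt_id c).mul ((hasDerivAt_const c (1:ℝ)).sub (hasDerivAt_id c))
        convert h using 1
        simp; ring
      have h2 : HasDerivAt (fun t : ℝ => (1 - t) * ψ 0 + t * ψ 1) (ψ 1 - ψ 0) c := by
        have h : HasDerivAt (fun t : ℝ => (1 - t) * ψ 0 + t * ψ 1) _ c :=
          (((hasDerivAt_const c (1:ℝ)).sub (hasDerivAt_id c)).mul_const (ψ 0)).add
          ((hasDerivAt_id c).mul_const (ψ 1))
        convert h using 1
        simp; ring
      exact (h1.const_mul μ').sub h2
    have hSder : HasDerivAt S (fderiv ℝ F (γ c) v + (μ' * (1 - 2 * c) - (ψ 1 - ψ 0))) c := by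
      have h : HasDerivAt S (fderiv ℝ F (γ c) v + (μ' * (1 - 2 * c) - (ψ 1 - ψ 0))) c :=
        hψder.add hqder
      simpa [hSdef] using h
    have hD0 : fderiv ℝ F (γ c) v + (μ' * (1 - 2 * c) - (ψ 1 - ψ 0)) = 0 :=
      hlocmax.hasDerivAt_eq_zero hSder
    have hSjder : HasDerivAt
        (fun t => φ j (γ t) + (μ' * (t * (1 - t)) - ((1 - t) * ψ 0 + t * ψ 1)))
        (A + (μ' * (1 - 2 * c) - (ψ 1 - ψ 0))) c := hgder.add hqder
    have hAeq : fderiv ℝ F (γ c) v + (μ' * (1 - 2 * c) - (ψ 1 - ψ 0))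
        = A + (μ' * (1 - 2 * c) - (ψ 1 - ψ 0)) := by
      refine hasDerivAt_eq_on_cluster hSder hSjder hneB (fun t ht => ?_) hcT
      simp only [hSdef]
      rw [heqT t ht]
    have hA0 : A + (μ' * (1 - 2 * c) - (ψ 1 - ψ 0)) = 0 := by rw [← hAeq]; exact hD0
    have hAval : A = (ψ 1 - ψ 0) - μ' * (1 - 2 * c) := by linarith
    have hTne : (T j \ {c}).Nonempty := by
      rcases eq_empty_or_nonempty (T j \ {c}) with h | h
      · rw [h, closure_empty] at hj; exact absurd hj (notMem_empty c)
      · exact h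
    obtain ⟨t₀, ht₀T, ht₀c⟩ := hTne
    have ht₀c' : t₀ ≠ c := ht₀c
    have hsc := hconv j (ball W ε) (hballV j hWBj) (convex_ball W ε)
      (γ c) hγcball (γ t₀) (hγmem t₀ ht₀T.1)
    have hdiffγ : γ t₀ - γ c = (t₀ - c) • v := by
      simp only [hγdef]
      rw [add_sub_add_left_eq_sub, ← sub_smul]
    have hinner : ⟪gradient (φ j) (γ c), γ t₀ - γ c⟫ = (t₀ - c) * A := by
      rw [hdiffγ, real_inner_smul_right]
    have hnormsq : ‖γ t₀ - γ c‖ ^ 2 = (t₀ - c) ^ 2 * d ^ 2 := by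
      rw [hdiffγ, norm_smul, mul_pow, Real.norm_eq_abs, sq_abs]
    rw [hinner, hnormsq, hAval] at hsc
    have hmax' : S t₀ ≤ S c := hcmax ht₀T.1
    have hSt₀ : S t₀ = φ j (γ t₀) + (μ' * (t₀ * (1 - t₀)) - ((1 - t₀) * ψ 0 + t₀ * ψ 1)) := by
      simp only [hSdef]
      rw [heqT t₀ ht₀T]
    have hScc : S c = φ j (γ c) + (μ' * (c * (1 - c)) - ((1 - c) * ψ 0 + c * ψ 1)) := by
      simp only [hSdef]
      rw [heqT c hcT]
    rw [hSt₀, hScc] at hmax'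
    have hsq : 0 < (t₀ - c) ^ 2 := by
      have h := sub_ne_zero.2 ht₀c'
      positivity
    have hθd : 0 < θ * d ^ 2 := by positivity
    have hμval : μ' = θ * d ^ 2 / 4 := hμdef
    nlinarith [hsc, hmax', mul_pos hθd hsq]
  -- Step B : use ∇F(W) = 0
  have hFdiffW : DifferentiableAt ℝ F W :=
    (hF.differentiableOn one_ne_zero).differentiableAt (hO.mem_nhds (hUO hWU))
  have hψ0der : HasDerivAt ψ 0 0 := by
    have h1 : HasFDerivAt F (toDual ℝ _ (gradient F W)) W :=
      hasGradientAt_iff_hasFDerivAt.1 hFdiffW.hasGradientAt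
    rw [hgrad] at h1
    have h2 : HasFDerivAt F (toDual ℝ (EuclideanSpace ℝ (Fin m)) 0) (γ 0) := by
      rw [hγ0]; exact h1
    have h3 : HasDerivAt (fun t => F (γ t)) (toDual ℝ (EuclideanSpace ℝ (Fin m)) 0 v) 0 :=
      h2.comp_hasDerivAt 0 (hγder 0)
    simpa [hψdef] using h3
  have hIooNe : (𝓝[Ioo (0:ℝ) 1] 0).NeBot := by
    apply mem_closure_iff_nhdsWithin_neBot.1
    rw [closure_Ioo (by norm_num : (0:ℝ) ≠ 1)]
    exact ⟨le_refl 0, by norm_num⟩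
  have hslope : Tendsto (slope ψ 0) (𝓝[Ioo (0:ℝ) 1] 0) (𝓝 0) :=
    (hasDerivAt_iff_tendsto_slope.1 hψ0der).mono_left
      (nhdsWithin_mono 0 fun t ht => Set.mem_compl_singleton_iff.2 (ne_of_gt ht.1))
  have hXtend : Tendsto (fun t : ℝ => (ψ 1 - ψ 0) - μ' * (1 - t)) (𝓝[Ioo (0:ℝ) 1] 0)
      (𝓝 ((ψ 1 - ψ 0) - μ')) := by
    have hcont : Continuous (fun t : ℝ => (ψ 1 - ψ 0) - μ' * (1 - t)) :=
      continuous_const.sub (continuous_const.mul (continuous_const.sub continuous_id))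
    have h1 := hcont.tendsto 0
    simp only [sub_zero, mul_one] at h1
    exact h1.mono_left nhdsWithin_le_nhds
  have hbound : ∀ᶠ t in 𝓝[Ioo (0:ℝ) 1] 0,
      slope ψ 0 t ≤ (ψ 1 - ψ 0) - μ' * (1 - t) := by
    filter_upwards [eventually_mem_nhdsWithin] with t ht
    have hk := key t ⟨le_of_lt ht.1, le_of_lt ht.2⟩
    rw [slope_def_field, sub_zero, div_le_iff₀ ht.1]
    nlinarith [hk]
  have hfinal : (0:ℝ) ≤ (ψ 1 - ψ 0) - μ' :=
    le_of_tendsto_of_tendsto hslope hXtend hbound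
  have hψ1 : ψ 1 = F x := by rw [hψdef]; simp only [hγ1]
  have hψ0' : ψ 0 = F W := by rw [hψdef]; simp only [hγ0]
  rw [hψ1, hψ0'] at hfinal
  linarith
end
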